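/- arXiv:1202.3621 — 5 statements merged into one kernel-verified Lean document; each statement's English description precedes it below -/
import Mathlib

section
/- Let M be an n×n real matrix whose column space is contained in an s-dimensional subspace F of ℝ^n, let d = n − s, let {ω^1,…,ω^d} be a reduced basis of F^⊥, and let M̃ be the n×n matrix whose top d rows are ω^1,…,ω^d and whose bottom s rows agree with the bottom s rows of M. Then ker(M) ∩ F = {0} if and only if det(M̃) ≠ 0. -/
noncomputable section

namespace CRN

variable {n m : ℕ}

/-- The orthogonal complement of a subspace of `Fin n → ℝ` with respect to the
standard scalar product. -/
def orthComp (F : Submodule ℝ (Fin n → ℝ)) : Submodule ℝ (Fin n → ℝ) where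
  carrier := {w | ∀ v ∈ F, ∑ i, w i * v i = 0}
  add_mem' := by
    intro a b ha hb v hv
    have h1 := ha v hv
    have h2 := hb v hv
    have key : ∀ i, (a + b) i * v i = a i * v i + b i * v i := fun i => by
      simp [add_mul]
    calc ∑ i, (a + b) i * v i
        = ∑ i, (a i * v i + b i * v i) := Finset.sum_congr rfl (fun i _ => key i)
      _ = (∑ i, a i * v i) + ∑ i, b i * v i := Finset.sum_add_distrib
      _ = 0 := by rw [h1, h2, add_zero]
  zero_mem' := by
    intro v hv
    simp
  smul_mem' := by
    intro t a ha v hv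
    have h1 := ha v hv
    simp only [Set.mem_setOf_eq, Pi.smul_apply, smul_eq_mul]
    calc ∑ i, t * a i * v i
        = t * ∑ i, a i * v i := by
          rw [Finset.mul_sum]
          exact Finset.sum_congr rfl fun i _ => (mul_assoc _ _ _)
      _ = 0 := by rw [h1, mul_zero]

/-- `ω` is a reduced basis of `F^⊥`: it is a basis of the orthogonal complement of `F`,
`ω i` has `i`-th coordinate `1`, and `j`-th coordinate `0` for every `j < d`, `j ≠ i`. -/
def IsReducedBasis (d : ℕ) (F : Submodule ℝ (Fin n → ℝ)) (ω : Fin d → Fin n → ℝ) : Prop :=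
  (∀ i, ω i ∈ orthComp F) ∧
  Submodule.span ℝ (Set.range ω) = orthComp F ∧
  LinearIndependent ℝ ω ∧
  (∀ (i : Fin d) (j : Fin n), (j : ℕ) = (i : ℕ) → ω i j = 1) ∧
  (∀ (i : Fin d) (j : Fin n), (j : ℕ) < d → (j : ℕ) ≠ (i : ℕ) → ω i j = 0)

/-- The matrix whose top `d` rows are `ω` and whose remaining rows agree with `M`. -/
def tildeMat (d : ℕ) (ω : Fin d → Fin n → ℝ) (M : Matrix (Fin n) (Fin n) ℝ) :
    Matrix (Fin n) (Fin n) ℝ :=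
  Matrix.of fun i j => if h : (i : ℕ) < d then ω ⟨(i : ℕ), h⟩ j else M i j

/-- The stoichiometric matrix: `r`-th column is `y' r - y r`. -/
def stoich (y y' : Fin m → Fin n → ℝ) : Matrix (Fin n) (Fin m) ℝ :=
  Matrix.of fun i r => y' r i - y r i

/-- The stoichiometric subspace: the span of the reaction vectors `y' r - y r`. -/
def stoichSpan (y y' : Fin m → Fin n → ℝ) : Submodule ℝ (Fin n → ℝ) :=
  Submodule.span ℝ (Set.range fun r => (fun i => y' r i - y r i))

/-- The matrix whose `r`-th row is the kinetic-order vector `v r`. -/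
def Zmat (v : Fin m → Fin n → ℝ) : Matrix (Fin m) (Fin n) ℝ :=
  Matrix.of fun r i => v r i

/-- The Jacobian matrix of `f` at `c`. -/
def jac (f : (Fin n → ℝ) → Fin n → ℝ) (c : Fin n → ℝ) : Matrix (Fin n) (Fin n) ℝ :=
  Matrix.of fun i j => fderiv ℝ (fun x => f x i) c (Pi.single j 1)

/-- The species formation rate function of a kinetics `K`. -/
def specForm (y y' : Fin m → Fin n → ℝ) (K : Fin m → (Fin n → ℝ) → ℝ) (c : Fin n → ℝ) :
    Fin n → ℝ :=
  fun i => ∑ r, K r c * (y' r i - y r i)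

/-- The power-law rate functions with rate vector `κ` and kinetic order `v`. -/
def powerLaw (κ : Fin m → ℝ) (v : Fin m → Fin n → ℝ) : Fin m → (Fin n → ℝ) → ℝ :=
  fun r c => κ r * ∏ j, c j ^ v r j

/-- The power-law species formation rate function. -/
def plf (y y' : Fin m → Fin n → ℝ) (κ : Fin m → ℝ) (v : Fin m → Fin n → ℝ) (c : Fin n → ℝ) :
    Fin n → ℝ :=
  fun i => ∑ r, κ r * (∏ j, c j ^ v r j) * (y' r i - y r i)

/-- The extended rate function associated with a reduced basis `ω` and `f`. -/
def tildeF (d : ℕ) (ω : Fin d → Fin n → ℝ) (f : (Fin n → ℝ) → Fin n → ℝ) (c : Fin n → ℝ) :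
    Fin n → ℝ :=
  fun i => if h : (i : ℕ) < d then ∑ j, ω ⟨(i : ℕ), h⟩ j * c j else f c i

/-- The extended rate function with the bottom `s` components negated. -/
def hatF (d : ℕ) (ω : Fin d → Fin n → ℝ) (f : (Fin n → ℝ) → Fin n → ℝ) (c : Fin n → ℝ) :
    Fin n → ℝ :=
  fun i => if h : (i : ℕ) < d then ∑ j, ω ⟨(i : ℕ), h⟩ j * c j else -(f c i)

/-- Membership in the positive orthant. -/
def Pos (c : Fin n → ℝ) : Prop := ∀ i, 0 < c i

/-- The network is injective over the power-law kinetics with fixed kinetic order `v`. -/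
def InjOverPL (y y' : Fin m → Fin n → ℝ) (v : Fin m → Fin n → ℝ) : Prop :=
  ∀ κ : Fin m → ℝ, (∀ r, 0 < κ r) → ∀ a b : Fin n → ℝ, Pos a → Pos b → a ≠ b →
    a - b ∈ stoichSpan y y' → plf y y' κ v a ≠ plf y y' κ v b

/-- An influence specification takes values in `{-1, 0, 1}`. -/
def IsInfluence (I : Fin m → Fin n → ℝ) : Prop := ∀ r i, I r i = -1 ∨ I r i = 0 ∨ I r i = 1

/-- The influence specification associated with a kinetic order `v`. -/
def infOf (v : Fin m → Fin n → ℝ) : Fin m → Fin n → ℝ := fun r i => Real.sign (v r i)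

/-- `v ∈ Σ(I)`: the kinetic order `v` has associated influence specification `I`. -/
def InSigma (I : Fin m → Fin n → ℝ) (v : Fin m → Fin n → ℝ) : Prop :=
  ∀ r i, Real.sign (v r i) = I r i

/-- The partial order `I' ≼ I` on influence specifications. -/
def Preceq (I' I : Fin m → Fin n → ℝ) : Prop :=
  ∀ r i, (I' r i = 1 → I r i = 1) ∧ (I' r i = -1 → I r i = -1)

/-- The matrix `M̃(v)`: top `d` rows `ω`, bottom rows from `A ⬝ Z(v)`. -/
def Mt (y y' : Fin m → Fin n → ℝ) (d : ℕ) (ω : Fin d → Fin n → ℝ)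
    (v : Fin m → Fin n → ℝ) : Matrix (Fin n) (Fin n) ℝ :=
  tildeMat d ω (stoich y y' * Zmat v)

/-- The influence specification `I` has a signed determinant. -/
def SignedDet (y y' : Fin m → Fin n → ℝ) (d : ℕ) (ω : Fin d → Fin n → ℝ)
    (I : Fin m → Fin n → ℝ) : Prop :=
  ∀ v w, InSigma I v → InSigma I w →
    Real.sign (Mt y y' d ω v).det = Real.sign (Mt y y' d ω w).det

/-- The influence specification `I` is sign-nonsingular (SNS). -/
def IsSNS (y y' : Fin m → Fin n → ℝ) (d : ℕ) (ω : Fin d → Fin n → ℝ)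
    (I : Fin m → Fin n → ℝ) : Prop :=
  SignedDet y y' d ω I ∧ ∀ v, InSigma I v → (Mt y y' d ω v).det ≠ 0

/-- `Ω` is an admissible kinetics domain: `ℝ^n_{>0} ⊆ Ω ⊆ ℝ^n_{≥0}`. -/
def KinDom (Ω : Set (Fin n → ℝ)) : Prop :=
  {c : Fin n → ℝ | ∀ i, 0 < c i} ⊆ Ω ∧ Ω ⊆ {c : Fin n → ℝ | ∀ i, 0 ≤ c i}

/-- The rate functions are nonnegative on the domain. -/
def KinNonneg (Ω : Set (Fin n → ℝ)) (K : Fin m → (Fin n → ℝ) → ℝ) : Prop :=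
  ∀ r, ∀ c ∈ Ω, 0 ≤ K r c

/-- `I_r^+ ⊆ supp c`. -/
def PosSupp (I : Fin m → Fin n → ℝ) (r : Fin m) (c : Fin n → ℝ) : Prop :=
  ∀ i, I r i = 1 → c i ≠ 0

/-- The kinetics `K` respects the influence specification `I`. -/
def Respects (Ω : Set (Fin n → ℝ)) (K : Fin m → (Fin n → ℝ) → ℝ)
    (I : Fin m → Fin n → ℝ) : Prop :=
  ∀ c ∈ Ω, ∀ r, (0 < K r c ↔ PosSupp I r c)

/-- The kinetics `K` is strictly monotonic with respect to `I`. -/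
def StrictlyMonotonic (Ω : Set (Fin n → ℝ)) (K : Fin m → (Fin n → ℝ) → ℝ)
    (I : Fin m → Fin n → ℝ) : Prop :=
  Respects Ω K I ∧
  ∀ (r : Fin m) (c d : Fin n → ℝ), c ∈ Ω → d ∈ Ω → PosSupp I r c → PosSupp I r d →
    ∀ i, (∀ j, j ≠ i → c j = d j) →
      ((I r i = 1 → c i < d i → K r c < K r d) ∧
       (I r i = -1 → c i < d i → K r d < K r c) ∧
       (I r i = 0 → K r c = K r d))

/-- The kinetics `K` is differentiable with respect to `I`. -/
def DiffWrt (Ω : Set (Fin n → ℝ)) (K : Fin m → (Fin n → ℝ) → ℝ)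
    (I : Fin m → Fin n → ℝ) : Prop :=
  Respects Ω K I ∧
  (∀ r, ∀ c ∈ Ω, ContinuousWithinAt (K r) Ω c) ∧
  (∀ (r : Fin m) (c : Fin n → ℝ), (∀ i, 0 < c i) → DifferentiableAt ℝ (K r) c) ∧
  (∀ (r : Fin m) (c : Fin n → ℝ), (∀ i, 0 < c i) → ∀ i,
     Real.sign (fderiv ℝ (K r) c (Pi.single i 1)) = I r i)

/-- `a` and `b` are non-overlapping with respect to `I`. -/
def NonOverlap (I : Fin m → Fin n → ℝ) (a b : Fin n → ℝ) : Prop :=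
  ∀ r, ¬ PosSupp I r a → PosSupp I r b

/-- The kinetics `K` is weakly monotonic with respect to `I`. -/
def WeaklyMonotonic (y : Fin m → Fin n → ℝ) (Ω : Set (Fin n → ℝ))
    (K : Fin m → (Fin n → ℝ) → ℝ) (I : Fin m → Fin n → ℝ) : Prop :=
  ∀ a ∈ Ω, ∀ b ∈ Ω, NonOverlap I a b → ∀ r,
    (K r b < K r a → ∃ i, Real.sign (a i - b i) = I r i ∧ I r i ≠ 0) ∧
    (K r a = K r b →
      ((∀ i, y r i ≠ 0 → a i = b i) ∨
        ∃ i j, i ≠ j ∧ Real.sign (a i - b i) = I r i ∧ I r i ≠ 0 ∧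
          Real.sign (a j - b j) = -(I r j) ∧ I r j ≠ 0))

/-- A square real matrix is a P-matrix: all principal minors are positive. -/
def IsPMatrix {N : ℕ} (M : Matrix (Fin N) (Fin N) ℝ) : Prop :=
  ∀ J : Finset (Fin N),
    0 < (M.submatrix (fun i : {x // x ∈ J} => (i : Fin N))
          (fun j : {x // x ∈ J} => (j : Fin N))).det

/-- The minor `det(A_{J,C})` of the stoichiometric matrix. -/
def subDetA (y y' : Fin m → Fin n → ℝ) (s : ℕ) (J : Finset (Fin n)) (C : Finset (Fin m))
    (hJ : J.card = s) (hC : C.card = s) : ℝ :=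
  ((stoich y y').submatrix (fun a => (J.orderIsoOfFin hJ a).1)
    (fun b => (C.orderIsoOfFin hC b).1)).det

/-- The minor `det(Z(v)_{C,J})`. -/
def subDetZ (v : Fin m → Fin n → ℝ) (s : ℕ) (C : Finset (Fin m)) (J : Finset (Fin n))
    (hC : C.card = s) (hJ : J.card = s) : ℝ :=
  ((Zmat v).submatrix (fun a => (C.orderIsoOfFin hC a).1)
    (fun b => (J.orderIsoOfFin hJ b).1)).det

/-- The Hill-type species formation rate function. -/
def hillf (y y' : Fin m → Fin n → ℝ) (κ : Fin m → ℝ) (δ v : Fin m → Fin n → ℝ)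
    (c : Fin n → ℝ) : Fin n → ℝ :=
  fun i => ∑ r, κ r * (∏ j, (c j ^ v r j) / (δ r j + c j ^ v r j)) * (y' r i - y r i)

/-!
A vector `x` lies in the kernel of `M̃` iff `x` is orthogonal to every `ω i`, i.e. `x ∈ F^⊥⊥ = F`,
and the last `s` coordinates of `M x` vanish. Since `M x ∈ F`, and for `y ∈ F` vanishing in the
last `s` coordinates the reduced shape of `ω` gives `y i = ω i ⬝ y = 0` for `i < d`, this forces
`M x = 0`. Hence `ker M̃ = ker M ∩ F`, and `M̃` is invertible iff this intersection is trivial.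
-/

open Matrix

lemma orthComp_eq_orthogonal (F : Submodule ℝ (Fin n → ℝ)) :
    orthComp F = LinearMap.BilinForm.orthogonal (dotProductBilin ℝ ℝ) F := by
  ext w
  simp only [LinearMap.BilinForm.mem_orthogonal_iff, dotProductBilin_apply_apply,
    dotProduct_comm _ w]
  rfl

lemma orthComp_orthComp (F : Submodule ℝ (Fin n → ℝ)) : orthComp (orthComp F) = F := by
  have hsymm : (dotProductBilin ℝ ℝ : LinearMap.BilinForm ℝ (Fin n → ℝ)).IsRefl :=
    fun x y h => by simpa [dotProduct_comm] using h
  have hnondeg : (dotProductBilin ℝ ℝ : LinearMap.BilinForm ℝ (Fin n → ℝ)).Nondegenerate :=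
    ⟨fun x hx => dotProduct_self_eq_zero.mp (hx x), fun y hy => dotProduct_self_eq_zero.mp (hy y)⟩
  rw [orthComp_eq_orthogonal, orthComp_eq_orthogonal,
    LinearMap.BilinForm.orthogonal_orthogonal hnondeg hsymm]

lemma mem_orthComp_span_range_iff {ι : Type*} (v : ι → Fin n → ℝ) (w : Fin n → ℝ) :
    w ∈ orthComp (Submodule.span ℝ (Set.range v)) ↔ ∀ i, v i ⬝ᵥ w = 0 := by
  change Submodule.span ℝ (Set.range v) ≤ LinearMap.ker (dotProductBilin ℝ ℝ w) ↔ _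
  simp [Submodule.span_le, Set.range_subset_iff, dotProduct_comm w]

lemma mulVec_mem_of_forall_col_mem {ι : Type*} [Fintype ι] {F : Submodule ℝ (Fin n → ℝ)}
    {M : Matrix (Fin n) ι ℝ} (hcol : ∀ r, (fun i => M i r) ∈ F) (x : ι → ℝ) : M *ᵥ x ∈ F := by
  have : M *ᵥ x ∈ LinearMap.range M.mulVecLin := ⟨x, rfl⟩
  rw [range_mulVecLin] at this
  exact Submodule.span_le.mpr (Set.range_subset_iff.mpr hcol) this

lemma tildeMat_mulVec_apply (d : ℕ) (ω : Fin d → Fin n → ℝ) (M : Matrix (Fin n) (Fin n) ℝ)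
    (x : Fin n → ℝ) (i : Fin n) :
    (tildeMat d ω M *ᵥ x) i = if h : (i : ℕ) < d then ω ⟨i, h⟩ ⬝ᵥ x else (M *ᵥ x) i := by
  by_cases h : (i : ℕ) < d <;> simp [tildeMat, mulVec, h]

lemma tildeMat_mulVec_eq_zero_iff {d : ℕ} (hd : d ≤ n) (ω : Fin d → Fin n → ℝ)
    (M : Matrix (Fin n) (Fin n) ℝ) (x : Fin n → ℝ) :
    tildeMat d ω M *ᵥ x = 0 ↔ (∀ i, ω i ⬝ᵥ x = 0) ∧ ∀ j : Fin n, d ≤ j → (M *ᵥ x) j = 0 := by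
  simp only [funext_iff, tildeMat_mulVec_apply, Pi.zero_apply]
  refine ⟨fun h => ⟨fun i => ?_, fun j hj => ?_⟩, fun ⟨hω, hM⟩ j => ?_⟩
  · simpa using h (Fin.castLE hd i)
  · simpa [hj.not_gt] using h j
  · split_ifs with hj
    exacts [hω _, hM j (not_lt.mp hj)]

namespace IsReducedBasis

variable {d : ℕ} {F : Submodule ℝ (Fin n → ℝ)} {ω : Fin d → Fin n → ℝ}

lemma le_dim (hω : IsReducedBasis d F ω) : d ≤ n := by
  simpa using hω.2.2.1.fintype_card_le_finrank

lemma mem_iff (hω : IsReducedBasis d F ω) {x : Fin n → ℝ} : x ∈ F ↔ ∀ i, ω i ⬝ᵥ x = 0 := by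
  rw [← mem_orthComp_span_range_iff, hω.2.1, orthComp_orthComp]

lemma dotProduct_eq_apply (hω : IsReducedBasis d F ω) {y : Fin n → ℝ}
    (hy : ∀ j : Fin n, d ≤ j → y j = 0) (i : Fin d) (j : Fin n) (hij : (j : ℕ) = i) :
    ω i ⬝ᵥ y = y j := by
  rw [dotProduct, Finset.sum_eq_single j, hω.2.2.2.1 i j hij, one_mul]
  · intro k _ hkj
    by_cases hk : (k : ℕ) < d
    · rw [hω.2.2.2.2 i k hk (fun h => hkj (Fin.ext (h.trans hij.symm))), zero_mul]
    · rw [hy k (not_lt.mp hk), mul_zero]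
  · simp

lemma eq_zero_of_mem (hω : IsReducedBasis d F ω) {y : Fin n → ℝ} (hyF : y ∈ F)
    (hy : ∀ j : Fin n, d ≤ j → y j = 0) : y = 0 := by
  funext j
  by_cases hj : (j : ℕ) < d
  · rw [← hω.dotProduct_eq_apply hy ⟨j, hj⟩ j rfl]
    exact hω.1 _ y hyF
  · exact hy j (not_lt.mp hj)

end IsReducedBasis

lemma tildeMat_mulVec_eq_zero_iff_of_isReducedBasis {d : ℕ} {F : Submodule ℝ (Fin n → ℝ)}
    {ω : Fin d → Fin n → ℝ} (hω : IsReducedBasis d F ω) {M : Matrix (Fin n) (Fin n) ℝ}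
    (hcol : ∀ r, (fun i => M i r) ∈ F) (x : Fin n → ℝ) :
    tildeMat d ω M *ᵥ x = 0 ↔ M *ᵥ x = 0 ∧ x ∈ F := by
  rw [tildeMat_mulVec_eq_zero_iff hω.le_dim, ← hω.mem_iff]
  constructor
  · rintro ⟨hxF, hMx⟩
    exact ⟨hω.eq_zero_of_mem (mulVec_mem_of_forall_col_mem hcol x) hMx, hxF⟩
  · rintro ⟨hMx, hxF⟩
    exact ⟨hxF, fun j _ => by rw [hMx, Pi.zero_apply]⟩

theorem stmt0_general {n : ℕ} (d : ℕ)
    (M : Matrix (Fin n) (Fin n) ℝ) (F : Submodule ℝ (Fin n → ℝ))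
    (hcol : ∀ r : Fin n, (fun i => M i r) ∈ F)
    (ω : Fin d → Fin n → ℝ)
    (hω : IsReducedBasis d F ω) :
    (LinearMap.ker M.mulVecLin ⊓ F = ⊥) ↔ (tildeMat d ω M).det ≠ 0 := by
  rw [Ne, ← exists_mulVec_eq_zero_iff, Submodule.eq_bot_iff]
  simp only [Submodule.mem_inf, LinearMap.mem_ker, mulVecLin_apply,
    ← tildeMat_mulVec_eq_zero_iff_of_isReducedBasis hω hcol]
  exact ⟨fun h ⟨v, hv, hTv⟩ => hv (h v hTv), fun h v hTv => by_contra fun hv => h ⟨v, hv, hTv⟩⟩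

/-- Proposition `kernel`. -/
theorem stmt0 {n s : ℕ} (d : ℕ) (hd : d = n - s)
    (M : Matrix (Fin n) (Fin n) ℝ) (F : Submodule ℝ (Fin n → ℝ))
    (hF : Module.finrank ℝ F = s)
    (hcol : ∀ r : Fin n, (fun i => M i r) ∈ F)
    (ω : Fin d → Fin n → ℝ)
    (hω : IsReducedBasis d F ω) :
    (LinearMap.ker M.mulVecLin ⊓ F = ⊥) ↔ (tildeMat d ω M).det ≠ 0 :=
  stmt0_general d M F hcol ω hω

end CRN
end
end

section
/- Let M be an n×n real matrix whose column space is contained in an s-dimensional subspace F of ℝ^n, let d = n − s, let {ω^1,…,ω^d} be a reduced basis of F^⊥, and let M̃ be the n×n matrix whose top d rows are ω^1,…,ω^d and whose bottom s rows agree with the bottom s rows of M. Then det(M̃) = Σ_{J ⊆ {1,…,n}, #J = s} det(M_{J,J}), where M_{J,J} denotes the principal submatrix of M with rows and columns indexed by J. -/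
noncomputable section

namespace CRN

variable {n m : ℕ}

/-! Let `U` be the matrix with top rows `ω` and bottom rows those of the identity; it is
unitriangular. As `ω` annihilates the columns of `M`,
`U (t•1 + M) = diag(t,…,t,1,…,1) M̃(t•1 + M)`, so `det (t•1 + M) = t ^ d det M̃(t•1 + M)` as
polynomials in `t`. The coefficient of `t ^ d` is the sum of the principal minors of size
`n - d = s` on the left, and `det M̃(M)` on the right. -/

section

open Matrix Polynomial

theorem coeff_det_scalar_X_add_map_C {ι R : Type*} [Fintype ι] [DecidableEq ι] [CommRing R]
    (A : Matrix ι ι R) {k : ℕ} (hk : k ≤ Fintype.card ι) :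
    (scalar ι (X : R[X]) + A.map C).det.coeff (Fintype.card ι - k) =
      ∑ J ∈ Finset.univ.powersetCard k, (A.submatrix (Subtype.val : J → ι) Subtype.val).det := by
  have hchar : scalar ι (X : R[X]) + A.map C = charmatrix (-A) := by
    rw [charmatrix, RingHom.mapMatrix_apply, Matrix.map_neg _ (map_neg C), sub_neg_eq_add]
  rw [hchar, ← charpoly, charpoly_coeff_eq_sum_minors _ _ hk, Finset.mul_sum]
  refine Finset.sum_congr rfl fun J hJ => ?_
  simp only [submatrix_neg, Pi.neg_apply, det_neg, Fintype.card_coe,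
    (Finset.mem_powersetCard.mp hJ).2, ← mul_assoc, ← mul_pow, neg_one_mul, neg_neg, one_pow,
    one_mul]

variable {R : Type*} [CommRing R] {d : ℕ}

def replaceTopRows (d : ℕ) (ω : Fin d → Fin n → R) (A : Matrix (Fin n) (Fin n) R) :
    Matrix (Fin n) (Fin n) R :=
  of fun i j => if h : (i : ℕ) < d then ω ⟨i, h⟩ j else A i j

theorem replaceTopRows_map {S : Type*} [CommRing S] (f : R →+* S) (ω : Fin d → Fin n → R)
    (A : Matrix (Fin n) (Fin n) R) :
    (replaceTopRows d ω A).map f = replaceTopRows d (fun i j => f (ω i j)) (A.map f) := by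
  ext i j
  by_cases h : (i : ℕ) < d <;> simp [replaceTopRows, h]

theorem det_replaceTopRows_one {ω : Fin d → Fin n → R}
    (hdiag : ∀ (i : Fin d) (j : Fin n), (j : ℕ) = i → ω i j = 1)
    (hlower : ∀ (i : Fin d) (j : Fin n), (j : ℕ) < i → ω i j = 0) :
    (replaceTopRows d ω 1).det = 1 := by
  have htri : (replaceTopRows d ω 1).BlockTriangular id := by
    intro i j hji
    by_cases h : (i : ℕ) < d
    · simpa [replaceTopRows, h] using hlower ⟨i, h⟩ j hji
    · simpa [replaceTopRows, h] using one_apply_ne (α := R) (ne_of_gt hji : i ≠ j)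
  rw [det_of_isUpperTriangular htri]
  refine Finset.prod_eq_one fun i _ => ?_
  by_cases h : (i : ℕ) < d
  · simpa [replaceTopRows, h] using hdiag ⟨i, h⟩ i rfl
  · simp [replaceTopRows, h]

theorem replaceTopRows_one_mul (ω : Fin d → Fin n → R) (B : Matrix (Fin n) (Fin n) R) :
    replaceTopRows d ω 1 * B = replaceTopRows d (fun i => ω i ᵥ* B) B := by
  ext i j
  by_cases h : (i : ℕ) < d
  · simp [replaceTopRows, h, mul_apply, vecMul, dotProduct]
  · simp [replaceTopRows, h, mul_apply, one_apply]

theorem diagonal_mul_replaceTopRows (t : R) (ω : Fin d → Fin n → R)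
    (B : Matrix (Fin n) (Fin n) R) :
    diagonal (fun i : Fin n => if (i : ℕ) < d then t else 1) * replaceTopRows d ω B =
      replaceTopRows d (t • ω) B := by
  ext i j
  by_cases h : (i : ℕ) < d <;> simp [replaceTopRows, h, diagonal_mul]

theorem det_scalar_add_eq_pow_mul_det_replaceTopRows (hd : d ≤ n) {ω : Fin d → Fin n → R}
    {A : Matrix (Fin n) (Fin n) R}
    (hdiag : ∀ (i : Fin d) (j : Fin n), (j : ℕ) = i → ω i j = 1)
    (hlower : ∀ (i : Fin d) (j : Fin n), (j : ℕ) < i → ω i j = 0)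
    (hωA : ∀ i, ω i ᵥ* A = 0) (t : R) :
    (scalar (Fin n) t + A).det = t ^ d * (replaceTopRows d ω (scalar (Fin n) t + A)).det := by
  have hrows : (fun i => ω i ᵥ* (scalar (Fin n) t + A)) = t • ω := by
    ext i j
    simp [vecMul_add, hωA i, scalar_apply]
  have := congrArg det <| (replaceTopRows_one_mul ω (scalar (Fin n) t + A)).trans <|
    hrows ▸ (diagonal_mul_replaceTopRows t ω _).symm
  rwa [det_mul, det_mul, det_replaceTopRows_one hdiag hlower, one_mul, det_diagonal,
    Finset.prod_ite, Finset.prod_const, Finset.prod_const_one, mul_one, Fin.card_filter_val_lt,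
    min_eq_right hd] at this

theorem det_replaceTopRows_eq_sum_principal_minors (hd : d ≤ n) {ω : Fin d → Fin n → R}
    {A : Matrix (Fin n) (Fin n) R}
    (hdiag : ∀ (i : Fin d) (j : Fin n), (j : ℕ) = i → ω i j = 1)
    (hlower : ∀ (i : Fin d) (j : Fin n), (j : ℕ) < i → ω i j = 0)
    (hωA : ∀ i, ω i ᵥ* A = 0) :
    (replaceTopRows d ω A).det =
      ∑ J ∈ Finset.univ.powersetCard (n - d),
        (A.submatrix (Subtype.val : J → Fin n) Subtype.val).det := by
  set P := replaceTopRows d (fun i j => C (ω i j)) (scalar (Fin n) (X : R[X]) + A.map C)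
  have hωAC : ∀ i, (fun j => C (ω i j)) ᵥ* A.map C = 0 := fun i => funext fun j => by
    simpa [hωA i, Function.comp_def] using (RingHom.map_vecMul C A (ω i) j).symm
  have hfactor : (scalar (Fin n) (X : R[X]) + A.map C).det = X ^ d * P.det :=
    det_scalar_add_eq_pow_mul_det_replaceTopRows hd
      (fun i j h => by rw [hdiag i j h, map_one]) (fun i j h => by rw [hlower i j h, map_zero])
      hωAC X
  have heval : (replaceTopRows d ω A).det = P.det.coeff 0 := by
    rw [coeff_zero_eq_eval_zero, ← coe_evalRingHom, RingHom.map_det, RingHom.mapMatrix_apply,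
      replaceTopRows_map]
    congr
    · ext; simp
    · ext i j; simp [scalar_apply, diagonal_apply, apply_ite]
  rw [heval, ← coeff_X_pow_mul P.det d 0, zero_add, ← hfactor,
    ← coeff_det_scalar_X_add_map_C A (by simp), Fintype.card_fin, Nat.sub_sub_self hd]

end

/-- Proposition `decomp`. -/
theorem stmt1 {n s : ℕ} (d : ℕ) (hd : d = n - s)
    (M : Matrix (Fin n) (Fin n) ℝ) (F : Submodule ℝ (Fin n → ℝ))
    (hF : Module.finrank ℝ F = s)
    (hcol : ∀ r : Fin n, (fun i => M i r) ∈ F)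
    (ω : Fin d → Fin n → ℝ)
    (hω : IsReducedBasis d F ω) :
    (tildeMat d ω M).det =
      ∑ J ∈ Finset.powersetCard s (Finset.univ : Finset (Fin n)),
        (M.submatrix (fun i : {x // x ∈ J} => (i : Fin n))
          (fun j : {x // x ∈ J} => (j : Fin n))).det := by
  obtain ⟨hωF, -, -, hdiag, hzero⟩ := hω
  have hsn : s ≤ n := hF ▸ (Submodule.finrank_le F).trans_eq (Module.finrank_fin_fun ℝ)
  have hlower : ∀ (i : Fin d) (j : Fin n), (j : ℕ) < i → ω i j = 0 :=
    fun i j hji => hzero i j (hji.trans i.isLt) hji.ne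
  have hωM : ∀ i, Matrix.vecMul (ω i) M = 0 := fun i => funext fun r => hωF i _ (hcol r)
  have := det_replaceTopRows_eq_sum_principal_minors (by omega) hdiag hlower hωM
  rwa [show n - d = s by omega] at this
end CRN
end
end

section
/- Let K = (K_1,…,K_m) be a kinetics for the network such that each K_r is differentiable at every c ∈ ℝ^n_{>0}, and let f̃_K be the associated extended rate function. Then for every c ∈ ℝ^n_{>0}, ker(J_c(f_K)) ∩ Γ = {0} if and only if det(J_c(f̃_K)) ≠ 0. In particular, a positive steady state c ∈ ℝ^n_{>0} (a point with f_K(c) = 0) is degenerate, i.e. ker(J_c(f_K)) ∩ Γ ≠ {0}, if and only if det(J_c(f̃_K)) = 0. -/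
/-! The Jacobian of `f_K` factors as `A · (∂K_r/∂c_j)`, so its columns lie in `Γ`, and the
Jacobian of `f̃_K` is the same matrix with its first `d` rows replaced by the reduced basis.
Hence `J_c(f̃_K) v = 0` says that `v ∈ Γ` and that the coordinates of `J_c(f_K) v` from `d`
on vanish. Pairing an element of `Γ` with `ω^i` returns its `i`-th coordinate plus a
combination of those from `d` on, so an element of `Γ` whose coordinates from `d` on vanish is
zero; thus `ker J_c(f̃_K) = ker J_c(f_K) ∩ Γ`. -/

noncomputable section

namespace CRN

variable {n m : ℕ}

open Matrix

lemma mem_orthComp_iff (F : Submodule ℝ (Fin n → ℝ)) (w : Fin n → ℝ) :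
    w ∈ orthComp F ↔ ∀ v ∈ F, w ⬝ᵥ v = 0 :=
  Iff.rfl

lemma orthComp_eq_comap_orthogonal (F : Submodule ℝ (Fin n → ℝ)) :
    orthComp F = ((F.comap (WithLp.linearEquiv 2 ℝ (Fin n → ℝ)).toLinearMap)ᗮ).comap
      (WithLp.linearEquiv 2 ℝ (Fin n → ℝ)).symm.toLinearMap := by
  ext w
  simp only [Submodule.mem_comap, Submodule.mem_orthogonal, mem_orthComp_iff,
    LinearEquiv.coe_coe, PiLp.inner_apply, RCLike.inner_apply, conj_trivial]
  refine ⟨fun h u hu => ?_, fun h v hv => ?_⟩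
  · simpa [dotProduct] using h _ hu
  · simpa [dotProduct] using h (WithLp.toLp 2 v) hv

lemma mem_orthComp_span_iff {ι : Type*} (g : ι → Fin n → ℝ) (w : Fin n → ℝ) :
    w ∈ orthComp (Submodule.span ℝ (Set.range g)) ↔ ∀ i, w ⬝ᵥ g i = 0 := by
  change Submodule.span ℝ (Set.range g) ≤ LinearMap.ker (dotProductBilin ℝ ℝ w) ↔ _
  rw [Submodule.span_le, Set.range_subset_iff]
  rfl

section ReducedBasis

variable {d : ℕ} {F : Submodule ℝ (Fin n → ℝ)} {ω : Fin d → Fin n → ℝ}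

lemma IsReducedBasis.card_le (hω : IsReducedBasis d F ω) : d ≤ n := by
  simpa using hω.2.2.1.fintype_card_le_finrank

lemma IsReducedBasis.mem_iff_s2 (hω : IsReducedBasis d F ω) (v : Fin n → ℝ) :
    v ∈ F ↔ ∀ i, ω i ⬝ᵥ v = 0 := by
  rw [← orthComp_orthComp F, ← hω.2.1, mem_orthComp_span_iff]
  simp only [dotProduct_comm v]

lemma IsReducedBasis.eq_zero_of_mem_s2 (hω : IsReducedBasis d F ω) {u : Fin n → ℝ} (hu : u ∈ F)
    (h : ∀ k : Fin n, d ≤ k → u k = 0) : u = 0 := by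
  funext k
  by_cases hk : (k : ℕ) < d
  · have : ω ⟨k, hk⟩ ⬝ᵥ u = u k := by
      rw [dotProduct, Finset.sum_eq_single k, hω.2.2.2.1 _ _ rfl, one_mul]
      · intro l _ hlk
        by_cases hl : (l : ℕ) < d
        · rw [hω.2.2.2.2 _ _ hl (Fin.val_ne_of_ne hlk), zero_mul]
        · rw [h l (not_lt.1 hl), mul_zero]
      · simp
    rw [← this, (hω.mem_iff_s2 u).1 hu]; rfl
  · exact h k (not_lt.1 hk)

lemma tildeMat_mulVec (M : Matrix (Fin n) (Fin n) ℝ) (v : Fin n → ℝ) (k : Fin n) :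
    (tildeMat d ω M *ᵥ v) k = if h : (k : ℕ) < d then ω ⟨k, h⟩ ⬝ᵥ v else (M *ᵥ v) k := by
  by_cases h : (k : ℕ) < d <;> simp [tildeMat, mulVec, dotProduct, h]

lemma IsReducedBasis.ker_tildeMat (hω : IsReducedBasis d F ω) {J : Matrix (Fin n) (Fin n) ℝ}
    (hJ : LinearMap.range J.mulVecLin ≤ F) :
    LinearMap.ker (tildeMat d ω J).mulVecLin = LinearMap.ker J.mulVecLin ⊓ F := by
  ext v
  simp only [Submodule.mem_inf, LinearMap.mem_ker, mulVecLin_apply, hω.mem_iff_s2 v, funext_iff,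
    Pi.zero_apply, tildeMat_mulVec]
  constructor
  · intro hv
    have hvF : ∀ i : Fin d, ω i ⬝ᵥ v = 0 := fun i => by
      simpa [i.2] using hv ⟨i, i.2.trans_le hω.card_le⟩
    refine ⟨congrFun (hω.eq_zero_of_mem_s2 (hJ ⟨v, rfl⟩) fun k hk => ?_), hvF⟩
    simpa [not_lt.2 hk] using hv k
  · rintro ⟨hJv, hvF⟩ k
    split_ifs
    exacts [hvF _, hJv k]

lemma IsReducedBasis.det_tildeMat_ne_zero_iff (hω : IsReducedBasis d F ω)
    {J : Matrix (Fin n) (Fin n) ℝ} (hJ : LinearMap.range J.mulVecLin ≤ F) :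
    (tildeMat d ω J).det ≠ 0 ↔ LinearMap.ker J.mulVecLin ⊓ F = ⊥ := by
  rw [← hω.ker_tildeMat hJ, ker_mulVecLin_eq_bot_iff, Ne, ← exists_mulVec_eq_zero_iff]
  simp only [not_exists, not_and]
  exact forall_congr' fun _ => not_imp_not

end ReducedBasis

lemma range_mulVecLin_stoich_mul_le {p : Type*} [Fintype p] (y y' : Fin m → Fin n → ℝ)
    (Z : Matrix (Fin m) p ℝ) :
    LinearMap.range (stoich y y' * Z).mulVecLin ≤ stoichSpan y y' := by
  rw [mulVecLin_mul]
  exact (LinearMap.range_comp_le_range _ _).trans (range_mulVecLin _).le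

lemma jac_specForm (y y' : Fin m → Fin n → ℝ) (K : Fin m → (Fin n → ℝ) → ℝ) (c : Fin n → ℝ)
    (hK : ∀ r, DifferentiableAt ℝ (K r) c) :
    jac (specForm y y' K) c =
      stoich y y' * Matrix.of fun r j => fderiv ℝ (K r) c (Pi.single j 1) := by
  ext i j
  have : fderiv ℝ (fun x => specForm y y' K x i) c =
      ∑ r, (y' r i - y r i) • fderiv ℝ (K r) c := by
    unfold specForm
    rw [fderiv_fun_sum fun r _ => (hK r).mul_const _]
    exact Finset.sum_congr rfl fun r _ => fderiv_mul_const (hK r) _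
  simp [jac, this, mul_apply, stoich]

lemma jac_tildeF (d : ℕ) (ω : Fin d → Fin n → ℝ) (f : (Fin n → ℝ) → Fin n → ℝ) (c : Fin n → ℝ) :
    jac (tildeF d ω f) c = tildeMat d ω (jac f c) := by
  ext i j
  by_cases h : (i : ℕ) < d
  · have : (fun x => tildeF d ω f x i) =
        (dotProductBilin ℝ ℝ (ω ⟨i, h⟩)).toContinuousLinearMap := by
      funext x; simp [tildeF, h, dotProduct]
    simp only [jac, tildeMat, of_apply, dif_pos h, this, ContinuousLinearMap.fderiv]
    simp
  · simp [jac, tildeMat, tildeF, h]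

theorem stmt2_general {n m : ℕ} (d : ℕ)
    (y y' : Fin m → Fin n → ℝ)
    (ω : Fin d → Fin n → ℝ)
    (hω : IsReducedBasis d (stoichSpan y y') ω)
    (K : Fin m → (Fin n → ℝ) → ℝ)
    (hKdiff : ∀ (r : Fin m) (c : Fin n → ℝ), (∀ i, 0 < c i) → DifferentiableAt ℝ (K r) c)
    (c : Fin n → ℝ) (hc : ∀ i, 0 < c i) :
    ((LinearMap.ker (jac (specForm y y' K) c).mulVecLin ⊓ stoichSpan y y' = ⊥) ↔
        (jac (tildeF d ω (specForm y y' K)) c).det ≠ 0) ∧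
    (specForm y y' K c = 0 →
      ((LinearMap.ker (jac (specForm y y' K) c).mulVecLin ⊓ stoichSpan y y' ≠ ⊥) ↔
        (jac (tildeF d ω (specForm y y' K)) c).det = 0)) := by
  have nondegenerate_iff :
      (LinearMap.ker (jac (specForm y y' K) c).mulVecLin ⊓ stoichSpan y y' = ⊥) ↔
        (jac (tildeF d ω (specForm y y' K)) c).det ≠ 0 := by
    rw [jac_tildeF, jac_specForm y y' K c fun r => hKdiff r c hc,
      hω.det_tildeMat_ne_zero_iff (range_mulVecLin_stoich_mul_le y y' _)]
  exact ⟨nondegenerate_iff, fun _ => nondegenerate_iff.not.trans not_not⟩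

/-- Proposition `jaccomp`. -/
theorem stmt2 {n m s : ℕ} (d : ℕ) (hd : d = n - s)
    (y y' : Fin m → Fin n → ℝ)
    (hs : Module.finrank ℝ (stoichSpan y y') = s)
    (ω : Fin d → Fin n → ℝ)
    (hω : IsReducedBasis d (stoichSpan y y') ω)
    (K : Fin m → (Fin n → ℝ) → ℝ)
    (hKnn : ∀ (r : Fin m) (c : Fin n → ℝ), (∀ i, 0 < c i) → 0 ≤ K r c)
    (hKdiff : ∀ (r : Fin m) (c : Fin n → ℝ), (∀ i, 0 < c i) → DifferentiableAt ℝ (K r) c)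
    (c : Fin n → ℝ) (hc : ∀ i, 0 < c i) :
    ((LinearMap.ker (jac (specForm y y' K) c).mulVecLin ⊓ stoichSpan y y' = ⊥) ↔
        (jac (tildeF d ω (specForm y y' K)) c).det ≠ 0) ∧
    (specForm y y' K c = 0 →
      ((LinearMap.ker (jac (specForm y y' K) c).mulVecLin ⊓ stoichSpan y y' ≠ ⊥) ↔
        (jac (tildeF d ω (specForm y y' K)) c).det = 0)) :=
  stmt2_general d y y' ω hω K hKdiff c hc
end CRN
end
end

section
/- Let v be a kinetic order for the network N. Then the following are equivalent: (i) N is injective over K_g(N)[v]; (ii) all the non-zero products det(A_{J,C}) det(Z(v)_{C,J}), taken over all sets C ⊆ {1,…,m} and J ⊆ {1,…,n} of cardinality s, have the same sign, and det(A_{J,C}) det(Z(v)_{C,J}) ≠ 0 for at least one choice of C and J. -/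
noncomputable section

/-!
For positive `a`, `b` the divided differences of `exp` are positive, so
`a - b = M⁻¹ (log a - log b)` and `f(a) - f(b) = A Λ Z(v) (log a - log b)` for positive diagonal
matrices `M`, `Λ`, and every such pair `(Λ, M)` arises from suitable `κ`, `a`, `b`. Hence `N` is
injective iff `A Λ Z(v) M` is injective on `Γ` for all positive diagonal `Λ`, `M`. Restricted to
`Γ`, this map has, by the Cauchy–Binet formula applied twice, the determinant
`∑_{C,J} λ^C μ^J det(A_{J,C}) det(Z(v)_{C,J})`, a polynomial in the weights whose monomials are
pairwise incomparable. Such a polynomial has no zero on the positive orthant iff its nonzero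
coefficients share one sign and one of them exists: near the 0/1 indicator of a monomial the
polynomial takes the sign of its coefficient, and the orthant is connected.
-/

open Finset Matrix Equiv

theorem Finset.prod_orderEmbOfFin {ι M : Type*} [LinearOrder ι] [CommMonoid M] (C : Finset ι)
    {s : ℕ} (h : C.card = s) (f : ι → M) : ∏ i, f (C.orderEmbOfFin h i) = ∏ r ∈ C, f r := by
  conv_rhs => rw [← C.image_orderEmbOfFin_univ h]
  rw [prod_image fun i _ j _ hij => (C.orderEmbOfFin h).injective hij]

section OrderEmbOfFin

variable {ι : Type*} [LinearOrder ι] {s : ℕ}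

theorem Finset.injective_orderEmbOfFin_comp_perm :
    Function.Injective fun q : {C : Finset ι // C.card = s} × Perm (Fin s) =>
      q.1.1.orderEmbOfFin q.1.2 ∘ q.2 := by
  rintro ⟨⟨C, hC⟩, τ⟩ ⟨⟨D, hD⟩, σ⟩ h
  obtain rfl : C = D := by
    simpa [Set.range_comp, τ.surjective.range_eq, σ.surjective.range_eq] using
      congrArg Set.range h
  obtain rfl : τ = σ := Equiv.ext fun k => (C.orderEmbOfFin hC).injective (congrFun h k)
  rfl

theorem Finset.exists_orderEmbOfFin_comp_perm_eq [Fintype ι] {p : Fin s → ι}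
    (hp : Function.Injective p) :
    ∃ q : {C : Finset ι // C.card = s} × Perm (Fin s), q.1.1.orderEmbOfFin q.1.2 ∘ q.2 = p := by
  set C := univ.image p
  have hC : C.card = s := by simp [C, card_image_of_injective _ hp]
  let τ : Fin s → Fin s := fun k => (C.orderIsoOfFin hC).symm ⟨p k, mem_image_of_mem p (mem_univ k)⟩
  have hτ : ∀ k, C.orderEmbOfFin hC (τ k) = p k := fun k => by
    simp [τ, ← coe_orderIsoOfFin_apply]
  have hτinj : Function.Injective τ := fun a b hab => hp (by rw [← hτ a, ← hτ b, hab])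
  exact ⟨(⟨C, hC⟩, Equiv.ofBijective τ hτinj.bijective_of_finite), funext hτ⟩

end OrderEmbOfFin

namespace Matrix

variable {R ι κ : Type*} [CommRing R] {s : ℕ}

theorem det_submatrix_mul_diagonal [Fintype κ] [DecidableEq κ] (X : Matrix ι κ R)
    (d : κ → R) (e : Fin s → ι) (f : Fin s → κ) :
    det ((X * diagonal d).submatrix e f) = (∏ j, d (f j)) * det (X.submatrix e f) := by
  rw [← det_mul_row]
  congr 1
  ext i j
  simp [mul_comm]

theorem mul_diagonal_mul_mul_diagonal_mulVec {ρ : Type*} [Fintype ι] [DecidableEq ι] [Fintype κ]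
    [DecidableEq κ] (A : Matrix ρ ι R) (lam : ι → R) (Z : Matrix ι κ R) (mu w : κ → R) :
    (A * diagonal lam * Z * diagonal mu) *ᵥ w = A *ᵥ (lam * Z *ᵥ (mu * w)) := by
  rw [← mulVec_mulVec, ← mulVec_mulVec, ← mulVec_mulVec]
  congr 1
  ext r
  rw [mulVec_diagonal, Pi.mul_apply]
  congr 2
  ext j
  rw [mulVec_diagonal, Pi.mul_apply]

theorem det_mul_eq_sum_prod_mul_det_submatrix [Fintype ι] (M : Matrix (Fin s) ι R)
    (N : Matrix ι (Fin s) R) :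
    det (M * N) = ∑ p : Fin s → ι, (∏ i, N (p i) i) * det (M.submatrix id p) := by
  simp only [det_apply', Matrix.mul_apply, prod_univ_sum, mul_sum, Fintype.piFinset_univ,
    submatrix_apply, id]
  rw [Finset.sum_comm]
  refine sum_congr rfl fun p _ => sum_congr rfl fun σ _ => ?_
  rw [prod_mul_distrib]
  ring

variable [Fintype ι] [LinearOrder ι]

/-- The Cauchy–Binet formula. -/
theorem det_mul_eq_sum_det_submatrix_mul_det_submatrix (M : Matrix (Fin s) ι R)
    (N : Matrix ι (Fin s) R) :
    det (M * N) = ∑ C : {C : Finset ι // C.card = s},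
      det (M.submatrix id (C.1.orderEmbOfFin C.2)) *
        det (N.submatrix (C.1.orderEmbOfFin C.2) id) := by
  have himage : univ.filter Function.Injective =
      univ.image fun q : {C : Finset ι // C.card = s} × Perm (Fin s) =>
        q.1.1.orderEmbOfFin q.1.2 ∘ q.2 := by
    ext p
    simp only [mem_filter, mem_univ, true_and, mem_image]
    exact ⟨fun hp => exists_orderEmbOfFin_comp_perm_eq hp, fun ⟨q, hq⟩ => hq ▸
      (q.1.1.orderEmbOfFin q.1.2).injective.comp q.2.injective⟩
  -- a non-injective `p` selects a column of `M` twice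
  rw [det_mul_eq_sum_prod_mul_det_submatrix,
    ← sum_subset (filter_subset Function.Injective univ) fun p _ hp => by
      obtain ⟨i, j, hij, hne⟩ : ∃ i j, p i = p j ∧ i ≠ j := by
        simpa [Function.Injective] using hp
      rw [det_zero_of_column_eq hne fun k => by simp [hij], mul_zero],
    himage, sum_image fun q _ _ _ h => injective_orderEmbOfFin_comp_perm h,
    Fintype.sum_prod_type]
  refine sum_congr rfl fun C _ => ?_
  have hperm : ∀ τ : Perm (Fin s), det (M.submatrix id (C.1.orderEmbOfFin C.2 ∘ τ)) =
      Perm.sign τ * det (M.submatrix id (C.1.orderEmbOfFin C.2)) := fun τ => by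
    rw [← det_permute', submatrix_submatrix, Function.id_comp]
  simp only [hperm, det_apply' (N.submatrix _ id), mul_sum, submatrix_apply, id,
    Function.comp_apply]
  exact sum_congr rfl fun τ _ => by ring

theorem det_mul_diagonal_mul_mul_diagonal_mul [Fintype κ] [LinearOrder κ]
    (A : Matrix (Fin s) ι R) (lam : ι → R) (Z : Matrix ι κ R) (mu : κ → R)
    (B : Matrix κ (Fin s) R) :
    det (A * diagonal lam * Z * diagonal mu * B) =
      ∑ J : {J : Finset κ // J.card = s}, ∑ C : {C : Finset ι // C.card = s},
        (∏ j ∈ J.1, mu j) * (∏ r ∈ C.1, lam r) *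
          (det ((B * A).submatrix (J.1.orderEmbOfFin J.2) (C.1.orderEmbOfFin C.2)) *
            det (Z.submatrix (C.1.orderEmbOfFin C.2) (J.1.orderEmbOfFin J.2))) := by
  have hrows : ∀ C : {C : Finset ι // C.card = s},
      det ((Z * diagonal mu * B).submatrix (C.1.orderEmbOfFin C.2) id) =
        ∑ J : {J : Finset κ // J.card = s}, (∏ j ∈ J.1, mu j) *
          (det (Z.submatrix (C.1.orderEmbOfFin C.2) (J.1.orderEmbOfFin J.2)) *
            det (B.submatrix (J.1.orderEmbOfFin J.2) id)) := fun C => by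
    rw [submatrix_mul (e₂ := id) (he₂ := Function.bijective_id), submatrix_id_id,
      det_mul_eq_sum_det_submatrix_mul_det_submatrix]
    refine sum_congr rfl fun J _ => ?_
    rw [submatrix_submatrix, Function.comp_id, Function.id_comp, det_submatrix_mul_diagonal,
      Finset.prod_orderEmbOfFin, mul_assoc]
  have hminors : ∀ (J : {J : Finset κ // J.card = s}) (C : {C : Finset ι // C.card = s}),
      det ((B * A).submatrix (J.1.orderEmbOfFin J.2) (C.1.orderEmbOfFin C.2)) =
        det (B.submatrix (J.1.orderEmbOfFin J.2) id) *
          det (A.submatrix id (C.1.orderEmbOfFin C.2)) := fun J C => by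
    rw [submatrix_mul (e₂ := id) (he₂ := Function.bijective_id), det_mul]
  rw [Matrix.mul_assoc (A * diagonal lam * Z), Matrix.mul_assoc (A * diagonal lam),
    ← Matrix.mul_assoc Z, det_mul_eq_sum_det_submatrix_mul_det_submatrix, sum_comm]
  simp only [det_submatrix_mul_diagonal, hrows, hminors, Finset.prod_orderEmbOfFin, mul_sum]
  exact sum_congr rfl fun C _ => sum_congr rfl fun J _ => by ring

end Matrix

section Restriction

variable {K ι : Type*} [Field K] [Fintype ι] {s : ℕ}

theorem Submodule.exists_matrix_basis_and_coordinates [DecidableEq ι] (Γ : Submodule K (ι → K))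
    (hs : Module.finrank K Γ = s) :
    ∃ (B : Matrix ι (Fin s) K) (P : Matrix (Fin s) ι K),
      P * B = 1 ∧ (∀ x, B *ᵥ x ∈ Γ) ∧ ∀ w ∈ Γ, B *ᵥ (P *ᵥ w) = w := by
  let b := (Module.finBasisOfFinrankEq K Γ hs).equivFun
  obtain ⟨g, hg⟩ := LinearMap.exists_extend (b : Γ →ₗ[K] Fin s → K)
  have hgb : ∀ x, g (b.symm x) = x := fun x => by
    simpa using LinearMap.congr_fun hg (b.symm x)
  refine ⟨LinearMap.toMatrix' (Γ.subtype ∘ₗ b.symm.toLinearMap), LinearMap.toMatrix' g, ?_,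
    fun x => by simp, fun w hw => ?_⟩
  · rw [← LinearMap.toMatrix'_comp, ← LinearMap.toMatrix'_id]
    exact congrArg _ (LinearMap.ext fun x => by simp [hgb])
  · have : g w = b ⟨w, hw⟩ := by simpa using LinearMap.congr_fun hg ⟨w, hw⟩
    simp [this]

/-- `P * M * B` is the matrix, in the basis formed by the columns of `B`, of the restriction of
`M` to `Γ`. -/
theorem Matrix.det_mul_mul_ne_zero_iff_forall_mulVec_eq_zero {Γ : Submodule K (ι → K)}
    {B : Matrix ι (Fin s) K} {P : Matrix (Fin s) ι K} (hPB : P * B = 1)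
    (hB : ∀ x, B *ᵥ x ∈ Γ) (hBP : ∀ w ∈ Γ, B *ᵥ (P *ᵥ w) = w) {M : Matrix ι ι K}
    (hM : ∀ x, M *ᵥ x ∈ Γ) :
    det (P * M * B) ≠ 0 ↔ ∀ w ∈ Γ, M *ᵥ w = 0 → w = 0 := by
  rw [Ne, ← exists_mulVec_eq_zero_iff, not_exists]
  constructor
  · intro h w hw hMw
    have hPw : P *ᵥ w = 0 := by
      by_contra hne
      exact h _ ⟨hne, by rw [← mulVec_mulVec, ← mulVec_mulVec, hBP w hw, hMw, mulVec_zero]⟩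
    rw [← hBP w hw, hPw, mulVec_zero]
  · rintro h x ⟨hx, hPMBx⟩
    have hMBx : M *ᵥ (B *ᵥ x) = 0 := by
      rw [← mulVec_mulVec, ← mulVec_mulVec] at hPMBx
      rw [← hBP _ (hM _), hPMBx, mulVec_zero]
    exact hx (by rw [← one_mulVec x, ← hPB, ← mulVec_mulVec, h _ (hB x) hMBx, mulVec_zero])

end Restriction

section MonomialSum

variable {ι α : Type*} [Fintype ι] (S : ι → Finset α) (c : ι → ℝ)

def monomialSum (x : α → ℝ) : ℝ := ∑ q, c q * ∏ i ∈ S q, x i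

variable {S c}

theorem continuous_monomialSum : Continuous (monomialSum S c) := by
  unfold monomialSum
  fun_prop

theorem monomialSum_neg (x : α → ℝ) : monomialSum S (-c) x = -monomialSum S c x := by
  simp [monomialSum, neg_mul, sum_neg_distrib]

theorem monomialSum_pos (hc : ∀ q, 0 ≤ c q) {q₀ : ι} (hq₀ : 0 < c q₀) {x : α → ℝ}
    (hx : ∀ i, 0 < x i) : 0 < monomialSum S c x :=
  sum_pos' (fun q _ => mul_nonneg (hc q) (prod_pos fun i _ => hx i).le)
    ⟨q₀, mem_univ _, mul_pos hq₀ (prod_pos fun i _ => hx i)⟩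

theorem monomialSum_indicator [DecidableEq α] (hS : ∀ q q', S q ⊆ S q' → q = q') (q₀ : ι) :
    monomialSum S c (fun i => if i ∈ S q₀ then 1 else 0) = c q₀ := by
  classical
  have hprod : ∀ q, ∏ i ∈ S q, (if i ∈ S q₀ then (1 : ℝ) else 0) = if q = q₀ then 1 else 0 :=
    fun q => by
      rw [prod_boole]
      exact if_congr ⟨hS q q₀, fun h => h ▸ fun _ => id⟩ rfl rfl
  simp only [monomialSum, hprod, mul_ite, mul_one, mul_zero, sum_ite_eq', mem_univ, if_true]

theorem exists_pos_monomialSum_pos (hS : ∀ q q', S q ⊆ S q' → q = q') {q₀ : ι}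
    (hq₀ : 0 < c q₀) : ∃ x : α → ℝ, (∀ i, 0 < x i) ∧ 0 < monomialSum S c x := by
  classical
  let x : ℝ → α → ℝ := fun t i => (if i ∈ S q₀ then 1 else 0) + t
  have hcont : Continuous fun t => monomialSum S c (x t) :=
    continuous_monomialSum.comp (by fun_prop)
  have h0 : monomialSum S c (x 0) = c q₀ := by
    simpa [x] using monomialSum_indicator hS q₀
  obtain ⟨t, ht, htpos⟩ := ((hcont.tendsto 0).eventually (lt_mem_nhds (h0 ▸ hq₀)) |>.filter_mono
    nhdsWithin_le_nhds |>.and (self_mem_nhdsWithin (s := Set.Ioi 0))).exists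
  exact ⟨x t, fun i => by positivity, ht⟩

theorem exists_pos_monomialSum_eq_zero (hS : ∀ q q', S q ⊆ S q' → q = q') {q₁ q₂ : ι}
    (hq₁ : 0 < c q₁) (hq₂ : c q₂ < 0) :
    ∃ x : α → ℝ, (∀ i, 0 < x i) ∧ monomialSum S c x = 0 := by
  obtain ⟨a, ha, hPa⟩ := exists_pos_monomialSum_pos hS hq₁
  obtain ⟨b, hb, hPb⟩ := exists_pos_monomialSum_pos (c := -c) hS (neg_pos.mpr hq₂)
  rw [monomialSum_neg, neg_pos] at hPb
  have hconvex : Convex ℝ {x : α → ℝ | ∀ i, 0 < x i} := by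
    simpa [Set.pi] using convex_pi (𝕜 := ℝ) (s := Set.univ) fun (i : α) _ => convex_Ioi (0 : ℝ)
  exact hconvex.isPreconnected.intermediate_value hb ha continuous_monomialSum.continuousOn
    ⟨hPb.le, hPa.le⟩

theorem forall_pos_monomialSum_ne_zero_iff (hS : ∀ q q', S q ⊆ S q' → q = q') :
    (∀ x : α → ℝ, (∀ i, 0 < x i) → monomialSum S c x ≠ 0) ↔
      (∀ q q', c q ≠ 0 → c q' ≠ 0 → (0 < c q ↔ 0 < c q')) ∧ ∃ q, c q ≠ 0 := by
  constructor
  · intro h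
    refine ⟨fun q q' hq hq' => ?_, ?_⟩
    · rcases hq.lt_or_gt with hq | hq <;> rcases hq'.lt_or_gt with hq' | hq'
      · exact iff_of_false hq.not_gt hq'.not_gt
      · obtain ⟨x, hx, hPx⟩ := exists_pos_monomialSum_eq_zero hS hq' hq
        exact absurd hPx (h x hx)
      · obtain ⟨x, hx, hPx⟩ := exists_pos_monomialSum_eq_zero hS hq hq'
        exact absurd hPx (h x hx)
      · exact iff_of_true hq hq'
    · by_contra! hc
      exact h 1 (fun _ => one_pos) (by simp [monomialSum, hc])
  · rintro ⟨hsame, q₀, hq₀⟩ x hx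
    rcases hq₀.lt_or_gt with hneg | hpos
    · have hc : ∀ q, 0 ≤ (-c) q := fun q => neg_nonneg.mpr <| not_lt.mp fun hq =>
        hneg.not_gt ((hsame q q₀ hq.ne' hq₀).mp hq)
      have := monomialSum_pos (S := S) hc (neg_pos.mpr hneg) hx
      rw [monomialSum_neg, neg_pos] at this
      exact this.ne
    · have hc : ∀ q, 0 ≤ c q := fun q => not_lt.mp fun hq =>
        hq.not_gt ((hsame q₀ q hq₀ hq.ne).mp hpos)
      exact (monomialSum_pos hc hpos hx).ne'

end MonomialSum

theorem Sum.forall_elim_iff {α β γ : Type*} (q : γ → Prop) {p : (α ⊕ β → γ) → Prop} :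
    (∀ x : α ⊕ β → γ, (∀ i, q (x i)) → p x) ↔
      ∀ f : α → γ, (∀ i, q (f i)) → ∀ g : β → γ, (∀ j, q (g j)) → p (Sum.elim f g) :=
  ⟨fun h f hf g hg => h _ (Sum.forall.mpr ⟨hf, hg⟩), fun h x hx => by
    simpa using h (x ∘ Sum.inl) (fun i => hx _) (x ∘ Sum.inr) (fun j => hx _)⟩

theorem Real.exp_sub_exp_eq_mul_dslope (x y : ℝ) :
    Real.exp x - Real.exp y = (x - y) * dslope Real.exp y x :=
  (sub_smul_dslope Real.exp y x).symm

theorem Real.dslope_exp_pos (x y : ℝ) : 0 < dslope Real.exp y x := by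
  rcases eq_or_ne x y with rfl | hxy
  · rw [dslope_same, Real.deriv_exp]
    exact Real.exp_pos x
  · rw [dslope_of_ne _ hxy]
    exact (Real.exp_strictMono.strictMonoOn Set.univ).slope_pos trivial trivial hxy.symm

theorem Real.exists_pos_mul_sub_eq_log_sub {a b : ℝ} (ha : 0 < a) (hb : 0 < b) :
    ∃ μ, 0 < μ ∧ μ * (a - b) = Real.log a - Real.log b := by
  refine ⟨(dslope Real.exp (Real.log b) (Real.log a))⁻¹, inv_pos.mpr (Real.dslope_exp_pos _ _), ?_⟩
  have hab := Real.exp_sub_exp_eq_mul_dslope (Real.log a) (Real.log b)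
  rw [Real.exp_log ha, Real.exp_log hb] at hab
  rw [hab]
  field_simp [(Real.dslope_exp_pos (Real.log a) (Real.log b)).ne']

theorem Real.exists_pos_sub_eq_and_log_sub_eq (w : ℝ) {μ : ℝ} (hμ : 0 < μ) :
    ∃ a b, 0 < a ∧ 0 < b ∧ a - b = w ∧ Real.log a - Real.log b = μ * w := by
  obtain ⟨d, hd, hexp⟩ : ∃ d, 0 < d ∧ Real.exp (μ * w) - 1 = μ * w * d :=
    ⟨_, Real.dslope_exp_pos _ _, by simpa using Real.exp_sub_exp_eq_mul_dslope (μ * w) 0⟩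
  have hb : 0 < (μ * d)⁻¹ := by positivity
  refine ⟨(μ * d)⁻¹ * Real.exp (μ * w), (μ * d)⁻¹, by positivity, hb, ?_, ?_⟩
  · calc (μ * d)⁻¹ * Real.exp (μ * w) - (μ * d)⁻¹ = (μ * d)⁻¹ * (Real.exp (μ * w) - 1) := by
          ring
      _ = w := by rw [hexp]; field_simp
  · rw [Real.log_mul hb.ne' (Real.exp_pos _).ne', Real.log_exp]
    ring

namespace CRN

variable {n m : ℕ}

theorem mulVec_stoich_mem (y y' : Fin m → Fin n → ℝ) (t : Fin m → ℝ) :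
    stoich y y' *ᵥ t ∈ stoichSpan y y' := by
  change _ ∈ Submodule.span ℝ (Set.range (stoich y y').col)
  rw [← range_mulVecLin]
  exact ⟨t, rfl⟩

theorem mul_mul_stoich_eq {s : ℕ} (y y' : Fin m → Fin n → ℝ) {B : Matrix (Fin n) (Fin s) ℝ}
    {P : Matrix (Fin s) (Fin n) ℝ} (hBP : ∀ w ∈ stoichSpan y y', B *ᵥ (P *ᵥ w) = w) :
    B * (P * stoich y y') = stoich y y' := by
  ext i r
  have := hBP _ (mulVec_stoich_mem y y' (Pi.single r 1))
  rw [mulVec_mulVec, mulVec_mulVec, mulVec_single_one, mulVec_single_one] at this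
  simpa [Matrix.mul_assoc] using congrFun this i

theorem plf_eq_mulVec (y y' : Fin m → Fin n → ℝ) (κ : Fin m → ℝ) (v : Fin m → Fin n → ℝ)
    (c : Fin n → ℝ) : plf y y' κ v c = stoich y y' *ᵥ fun r => κ r * ∏ j, c j ^ v r j := by
  ext i
  simp [plf, stoich, mulVec, dotProduct, mul_comm]

theorem prod_rpow_eq_exp (v : Fin m → Fin n → ℝ) {c : Fin n → ℝ} (hc : Pos c) (r : Fin m) :
    ∏ j, c j ^ v r j = Real.exp ((Zmat v *ᵥ (Real.log ∘ c)) r) := by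
  rw [show (Zmat v *ᵥ (Real.log ∘ c)) r = ∑ j, v r j * Real.log (c j) from rfl, Real.exp_sum]
  refine prod_congr rfl fun j _ => ?_
  rw [Real.rpow_def_of_pos (hc j), mul_comm]

theorem exists_plf_sub_plf_eq (y y' : Fin m → Fin n → ℝ) (v : Fin m → Fin n → ℝ)
    {a b : Fin n → ℝ} (ha : Pos a) (hb : Pos b) :
    ∃ d : Fin m → ℝ, (∀ r, 0 < d r) ∧ ∀ κ, plf y y' κ v a - plf y y' κ v b =
      stoich y y' *ᵥ (κ * d * Zmat v *ᵥ (Real.log ∘ a - Real.log ∘ b)) := by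
  refine ⟨fun r => dslope Real.exp ((Zmat v *ᵥ (Real.log ∘ b)) r) ((Zmat v *ᵥ (Real.log ∘ a)) r),
    fun r => Real.dslope_exp_pos _ _, fun κ => ?_⟩
  rw [plf_eq_mulVec, plf_eq_mulVec, ← mulVec_sub]
  congr 1
  ext r
  simp only [prod_rpow_eq_exp v ha, prod_rpow_eq_exp v hb, Pi.sub_apply, Pi.mul_apply,
    mulVec_sub, ← mul_sub, Real.exp_sub_exp_eq_mul_dslope]
  ring

theorem injOverPL_iff_forall_mulVec_eq_zero (y y' : Fin m → Fin n → ℝ) (v : Fin m → Fin n → ℝ) :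
    InjOverPL y y' v ↔ ∀ lam : Fin m → ℝ, (∀ r, 0 < lam r) → ∀ mu : Fin n → ℝ, (∀ j, 0 < mu j) →
      ∀ w ∈ stoichSpan y y', (stoich y y' * diagonal lam * Zmat v * diagonal mu) *ᵥ w = 0 →
        w = 0 := by
  simp only [mul_diagonal_mul_mul_diagonal_mulVec]
  constructor
  · intro hinj lam hlam mu hmu w hw hMw
    by_contra hw0
    choose a b ha hb hab hlog using fun j => Real.exists_pos_sub_eq_and_log_sub_eq (w j) (hmu j)
    obtain ⟨d, hd, hdiff⟩ := exists_plf_sub_plf_eq y y' v ha hb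
    have hab' : a - b = w := funext hab
    have hlamd : lam / d * d = lam := funext fun r => div_mul_cancel₀ _ (hd r).ne'
    refine hinj (lam / d) (fun r => div_pos (hlam r) (hd r)) a b ha hb
      (fun h => hw0 (by rw [← hab', h, sub_self])) (hab' ▸ hw) (sub_eq_zero.mp ?_)
    rw [hdiff, hlamd, show Real.log ∘ a - Real.log ∘ b = mu * w from funext hlog, hMw]
  · intro hker κ hκ a b ha hb hne hab heq
    choose mu hmu hmueq using fun j => Real.exists_pos_mul_sub_eq_log_sub (ha j) (hb j)
    obtain ⟨d, hd, hdiff⟩ := exists_plf_sub_plf_eq y y' v ha hb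
    refine hne (sub_eq_zero.mp (hker (κ * d) (fun r => mul_pos (hκ r) (hd r)) mu hmu _ hab ?_))
    rw [show mu * (a - b) = Real.log ∘ a - Real.log ∘ b from funext hmueq, ← hdiff, heq, sub_self]

theorem injOverPL_iff_forall_pos_monomialSum_ne_zero {s : ℕ} (y y' : Fin m → Fin n → ℝ)
    (hs : Module.finrank ℝ (stoichSpan y y') = s) (v : Fin m → Fin n → ℝ) :
    InjOverPL y y' v ↔ ∀ x : Fin m ⊕ Fin n → ℝ, (∀ i, 0 < x i) →
      monomialSum
        (fun q : {J : Finset (Fin n) // J.card = s} × {C : Finset (Fin m) // C.card = s} =>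
          q.2.1.disjSum q.1.1)
        (fun q => subDetA y y' s q.1.1 q.2.1 q.1.2 q.2.2 * subDetZ v s q.2.1 q.1.1 q.2.2 q.1.2)
        x ≠ 0 := by
  obtain ⟨B, P, hPB, hB, hBP⟩ := (stoichSpan y y').exists_matrix_basis_and_coordinates hs
  have hdet : ∀ lam mu, det (P * (stoich y y' * diagonal lam * Zmat v * diagonal mu) * B) =
      monomialSum
        (fun q : {J : Finset (Fin n) // J.card = s} × {C : Finset (Fin m) // C.card = s} =>
          q.2.1.disjSum q.1.1)
        (fun q => subDetA y y' s q.1.1 q.2.1 q.1.2 q.2.2 * subDetZ v s q.2.1 q.1.1 q.2.2 q.1.2)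
        (Sum.elim lam mu) := fun lam mu => by
    simp only [← Matrix.mul_assoc]
    rw [det_mul_diagonal_mul_mul_diagonal_mul, mul_mul_stoich_eq y y' hBP, monomialSum,
      Fintype.sum_prod_type]
    refine sum_congr rfl fun J _ => sum_congr rfl fun C _ => ?_
    simp only [subDetA, subDetZ, coe_orderIsoOfFin_apply, prod_sumElim]
    ring
  rw [injOverPL_iff_forall_mulVec_eq_zero, Sum.forall_elim_iff (0 < ·)]
  refine forall₂_congr fun lam _ => forall₂_congr fun mu _ => ?_
  rw [← hdet, det_mul_mul_ne_zero_iff_forall_mulVec_eq_zero hPB hB hBP fun x => ?_]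
  rw [mul_diagonal_mul_mul_diagonal_mulVec]
  exact mulVec_stoich_mem y y' _

/-- Proposition `det-criterion`. -/
theorem stmt5 {n m s : ℕ}
    (y y' : Fin m → Fin n → ℝ)
    (hs : Module.finrank ℝ (stoichSpan y y') = s)
    (v : Fin m → Fin n → ℝ) :
    InjOverPL y y' v ↔
      ((∀ (J₁ J₂ : Finset (Fin n)) (C₁ C₂ : Finset (Fin m))
          (hJ₁ : J₁.card = s) (hJ₂ : J₂.card = s) (hC₁ : C₁.card = s) (hC₂ : C₂.card = s),
          subDetA y y' s J₁ C₁ hJ₁ hC₁ * subDetZ v s C₁ J₁ hC₁ hJ₁ ≠ 0 →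
          subDetA y y' s J₂ C₂ hJ₂ hC₂ * subDetZ v s C₂ J₂ hC₂ hJ₂ ≠ 0 →
          (0 < subDetA y y' s J₁ C₁ hJ₁ hC₁ * subDetZ v s C₁ J₁ hC₁ hJ₁ ↔
           0 < subDetA y y' s J₂ C₂ hJ₂ hC₂ * subDetZ v s C₂ J₂ hC₂ hJ₂)) ∧
        (∃ (J : Finset (Fin n)) (C : Finset (Fin m)) (hJ : J.card = s) (hC : C.card = s),
          subDetA y y' s J C hJ hC * subDetZ v s C J hC hJ ≠ 0)) := by
  have hS : ∀ q q' : {J : Finset (Fin n) // J.card = s} × {C : Finset (Fin m) // C.card = s},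
      q.2.1.disjSum q.1.1 ⊆ q'.2.1.disjSum q'.1.1 → q = q' := fun q q' h => by
    have := eq_of_subset_of_card_le h (by simp [card_disjSum, q.1.2, q.2.2, q'.1.2, q'.2.2])
    simp only [disjSum_inj] at this
    exact Prod.ext (Subtype.ext this.2) (Subtype.ext this.1)
  rw [injOverPL_iff_forall_pos_monomialSum_ne_zero y y' hs v, forall_pos_monomialSum_ne_zero_iff hS]
  simp only [Prod.forall, Subtype.forall, Prod.exists, Subtype.exists]
  exact and_congr
    ⟨fun h J₁ J₂ C₁ C₂ hJ₁ hJ₂ hC₁ hC₂ => h J₁ hJ₁ C₁ hC₁ J₂ hJ₂ C₂ hC₂,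
      fun h J₁ hJ₁ C₁ hC₁ J₂ hJ₂ C₂ hC₂ => h J₁ J₂ C₁ C₂ hJ₁ hJ₂ hC₁ hC₂⟩
    ⟨fun ⟨J, hJ, C, hC, h⟩ => ⟨J, C, hJ, hC, h⟩, fun ⟨J, C, hJ, hC, h⟩ => ⟨J, hJ, C, hC, h⟩⟩

end CRN
end
end

section
/- Let I' and I be influence specifications for the network with I' ≼ I. Then: (a) if I has a signed determinant then I' has a signed determinant; (b) if I and I' are both SNS then the constant sign of det(M̃(v)) over v ∈ Σ(I) equals the constant sign of det(M̃(v')) over v' ∈ Σ(I'); (c) if I' is SNS and I has a signed determinant then I is SNS. -/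
noncomputable section

namespace CRN

variable {n m : ℕ}

section Aux

variable {n m : ℕ}

private lemma sign_cases (x : ℝ) :
    Real.sign x = -1 ∨ Real.sign x = 0 ∨ Real.sign x = 1 := by
  rcases lt_trichotomy x 0 with h | h | h
  · exact Or.inl (Real.sign_of_neg h)
  · exact Or.inr (Or.inl (by rw [h]; exact Real.sign_zero))
  · exact Or.inr (Or.inr (Real.sign_of_pos h))

private lemma pos_of_sign_one {x : ℝ} (h : Real.sign x = 1) : 0 < x := by
  rcases lt_trichotomy x 0 with h' | h' | h'
  · rw [Real.sign_of_neg h'] at h; norm_num at h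
  · rw [h', Real.sign_zero] at h; norm_num at h
  · exact h'

private lemma neg_of_sign_neg_one {x : ℝ} (h : Real.sign x = -1) : x < 0 := by
  rcases lt_trichotomy x 0 with h' | h' | h'
  · exact h'
  · rw [h', Real.sign_zero] at h; norm_num at h
  · rw [Real.sign_of_pos h'] at h; norm_num at h

private lemma selfSigma {I : Fin m → Fin n → ℝ} (hI : IsInfluence I) : InSigma I I := by
  intro r i
  rcases hI r i with h | h | h <;> rw [h]
  · exact Real.sign_of_neg (by norm_num)
  · exact Real.sign_zero
  · exact Real.sign_one

/-- Update a single entry of a kinetic order. -/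
private def updEntry (v : Fin m → Fin n → ℝ) (r : Fin m) (j : Fin n) (t : ℝ) :
    Fin m → Fin n → ℝ :=
  Function.update v r (Function.update (v r) j t)

private lemma updEntry_apply (v : Fin m → Fin n → ℝ) (r : Fin m) (j : Fin n) (t : ℝ)
    (r' : Fin m) (i : Fin n) :
    updEntry v r j t r' i = if r' = r ∧ i = j then t else v r' i := by
  simp only [updEntry, Function.update_apply]
  by_cases h1 : r' = r
  · subst h1
    by_cases h2 : i = j
    · subst h2; simp
    · simp [h2]
  · simp [h1]

private lemma updEntry_self (v : Fin m → Fin n → ℝ) (r : Fin m) (j : Fin n) :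
    updEntry v r j (v r j) = v := by
  unfold updEntry
  rw [Function.update_eq_self, Function.update_eq_self]

private lemma det_upd_affine (y y' : Fin m → Fin n → ℝ) (d : ℕ) (ω : Fin d → Fin n → ℝ)
    (v : Fin m → Fin n → ℝ) (r : Fin m) (j : Fin n) :
    ∃ α β : ℝ, ∀ t, (Mt y y' d ω (updEntry v r j t)).det = α + β * t := by
  classical
  set A0 := Mt y y' d ω (updEntry v r j 0) with hA0
  set e : Fin n → ℝ := fun i => if (i : ℕ) < d then 0 else stoich y y' i r with he
  have entry : ∀ (t : ℝ) (i : Fin n) (j' : Fin n),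
      Mt y y' d ω (updEntry v r j t) i j' =
        if h : (i : ℕ) < d then ω ⟨(i : ℕ), h⟩ j'
        else ∑ r', stoich y y' i r' * (updEntry v r j t r' j') := by
    intro t i j'
    simp [Mt, tildeMat, Matrix.mul_apply, Zmat]
  have sum_eq : ∀ (t : ℝ) (i : Fin n),
      (∑ r', stoich y y' i r' * (updEntry v r j t r' j)) =
        stoich y y' i r * t + ∑ r' ∈ Finset.univ \ {r}, stoich y y' i r' * v r' j := by
    intro t i
    have hf : (fun r' => stoich y y' i r' * (updEntry v r j t r' j)) =
        Function.update (fun r' => stoich y y' i r' * v r' j) r (stoich y y' i r * t) := by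
      funext r'
      rw [updEntry_apply]
      by_cases h1 : r' = r
      · subst h1; simp [Function.update_apply]
      · simp [Function.update_apply, h1]
    rw [hf, Finset.sum_update_of_mem (Finset.mem_univ r)]
  have key : ∀ t, Mt y y' d ω (updEntry v r j t)
      = A0.updateCol j (fun i => A0 i j + t * e i) := by
    intro t
    ext i j'
    by_cases hj : j' = j
    · subst hj
      rw [Matrix.updateCol_apply, if_pos rfl, hA0, entry t, entry 0]
      by_cases h : (i : ℕ) < d
      · simp [he, h]
      · rw [dif_neg h, dif_neg h, sum_eq t i, sum_eq 0 i, he]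
        simp [h]
        ring
    · rw [Matrix.updateCol_apply, if_neg hj, hA0, entry t, entry 0]
      by_cases h : (i : ℕ) < d
      · simp [h]
      · rw [dif_neg h, dif_neg h]
        refine Finset.sum_congr rfl fun r' _ => ?_
        rw [updEntry_apply, updEntry_apply]
        simp [hj]
  refine ⟨A0.det, (A0.updateCol j e).det, fun t => ?_⟩
  rw [key t]
  have hcol : (fun i => A0 i j + t * e i) = (fun i => A0 i j) + t • e := by
    funext i; simp [smul_eq_mul]
  rw [hcol, Matrix.det_updateCol_add, Matrix.det_updateCol_smul,
    Matrix.updateCol_eq_self]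
  ring

private lemma contF (y y' : Fin m → Fin n → ℝ) (d : ℕ) (ω : Fin d → Fin n → ℝ) :
    Continuous fun v : Fin m → Fin n → ℝ => (Mt y y' d ω v).det := by
  apply Continuous.matrix_det
  apply continuous_matrix
  intro i j
  simp only [Mt, tildeMat, Matrix.of_apply]
  by_cases h : (i : ℕ) < d
  · simp only [dif_pos h]; exact continuous_const
  · simp only [dif_neg h, Matrix.mul_apply, Zmat, Matrix.of_apply]
    apply continuous_finset_sum
    intro r _
    exact continuous_const.mul ((continuous_apply j).comp (continuous_apply r))

private lemma sign_mem_aux (y y' : Fin m → Fin n → ℝ) (d : ℕ) (ω : Fin d → Fin n → ℝ)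
    {I' I : Fin m → Fin n → ℝ} (hI : IsInfluence I)
    (hord : Preceq I' I) (hsd : SignedDet y y' d ω I)
    {v' : Fin m → Fin n → ℝ} (hv' : InSigma I' v') :
    Real.sign (Mt y y' d ω v').det = 0 ∨
    Real.sign (Mt y y' d ω v').det = Real.sign (Mt y y' d ω I).det := by
  set p : ℝ → (Fin m → Fin n → ℝ) := fun t r i => v' r i + t * I r i with hp
  have hpath : ∀ t : ℝ, 0 < t → InSigma I (p t) := by
    intro t ht r i
    have hIv : Real.sign (v' r i) = I' r i := hv' r i
    show Real.sign (v' r i + t * I r i) = I r i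
    rcases hI r i with h | h | h
    · rw [h]
      rcases sign_cases (v' r i) with h1 | h1 | h1
      · have hv : v' r i < 0 := neg_of_sign_neg_one h1
        exact Real.sign_of_neg (by nlinarith)
      · have hv : v' r i = 0 := Real.sign_eq_zero_iff.mp h1
        exact Real.sign_of_neg (by rw [hv]; nlinarith)
      · exfalso
        have h2 : I' r i = 1 := by rw [← hIv, h1]
        have h3 := (hord r i).1 h2
        rw [h] at h3; norm_num at h3
    · rw [h]
      rcases sign_cases (v' r i) with h1 | h1 | h1
      · exfalso
        have h2 : I' r i = -1 := by rw [← hIv, h1]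
        have h3 := (hord r i).2 h2
        rw [h] at h3; norm_num at h3
      · have hv : v' r i = 0 := Real.sign_eq_zero_iff.mp h1
        rw [hv]; simp [Real.sign_zero]
      · exfalso
        have h2 : I' r i = 1 := by rw [← hIv, h1]
        have h3 := (hord r i).1 h2
        rw [h] at h3; norm_num at h3
    · rw [h]
      rcases sign_cases (v' r i) with h1 | h1 | h1
      · exfalso
        have h2 : I' r i = -1 := by rw [← hIv, h1]
        have h3 := (hord r i).2 h2
        rw [h] at h3; norm_num at h3
      · have hv : v' r i = 0 := Real.sign_eq_zero_iff.mp h1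
        exact Real.sign_of_pos (by rw [hv]; nlinarith)
      · have hv : 0 < v' r i := pos_of_sign_one h1
        exact Real.sign_of_pos (by nlinarith)
  have hzero : ∀ t : ℝ, 0 < t →
      Real.sign (Mt y y' d ω (p t)).det = Real.sign (Mt y y' d ω I).det :=
    fun t ht => hsd (p t) I (hpath t ht) (selfSigma hI)
  have hp0 : p 0 = v' := by funext r i; simp [hp]
  have hcont : ContinuousAt (fun t : ℝ => (Mt y y' d ω (p t)).det) 0 := by
    apply Continuous.continuousAt
    apply (contF y y' d ω).comp
    apply continuous_pi; intro r; apply continuous_pi; intro i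
    fun_prop
  have htend : Filter.Tendsto (fun t : ℝ => (Mt y y' d ω (p t)).det)
      (nhdsWithin 0 (Set.Ioi 0)) (nhds (Mt y y' d ω v').det) := by
    have := hcont.tendsto
    rw [hp0] at this
    exact this.mono_left nhdsWithin_le_nhds
  rcases sign_cases ((Mt y y' d ω I).det) with hc1 | hc1 | hc1
  · have hle : (Mt y y' d ω v').det ≤ 0 := by
      apply le_of_tendsto htend
      filter_upwards [self_mem_nhdsWithin] with t ht
      exact le_of_lt (neg_of_sign_neg_one ((hzero t ht).trans hc1))
    rcases hle.lt_or_eq with hlt | heq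
    · right; rw [Real.sign_of_neg hlt, hc1]
    · left; rw [heq, Real.sign_zero]
  · left
    have h2 : Filter.Tendsto (fun t : ℝ => (Mt y y' d ω (p t)).det)
        (nhdsWithin 0 (Set.Ioi 0)) (nhds 0) := by
      apply Filter.Tendsto.congr' _ tendsto_const_nhds
      filter_upwards [self_mem_nhdsWithin] with t ht
      exact (Real.sign_eq_zero_iff.mp ((hzero t ht).trans hc1)).symm
    have h0 : (Mt y y' d ω v').det = 0 := tendsto_nhds_unique htend h2
    rw [h0, Real.sign_zero]
  · have hle : 0 ≤ (Mt y y' d ω v').det := by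
      apply ge_of_tendsto htend
      filter_upwards [self_mem_nhdsWithin] with t ht
      exact le_of_lt (pos_of_sign_one ((hzero t ht).trans hc1))
    rcases hle.lt_or_eq with hlt | heq
    · right; rw [Real.sign_of_pos hlt, hc1]
    · left; rw [← heq, Real.sign_zero]

private lemma affine_zero {α β c : ℝ} {sgn : ℝ}
    (hsig : ∀ t : ℝ, Real.sign t = sgn →
      Real.sign (α + β * t) = 0 ∨ Real.sign (α + β * t) = c)
    {t0 : ℝ} (ht0 : Real.sign t0 = sgn) (hne : sgn ≠ 0) (h0 : α + β * t0 = 0)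
    {t1 : ℝ} (ht1 : Real.sign t1 = sgn) : α + β * t1 = 0 := by
  have hβ : β = 0 := by
    by_contra hβ
    have ht0ne : t0 ≠ 0 := by
      intro h; rw [h, Real.sign_zero] at ht0; exact hne ht0.symm
    have hs1 : Real.sign (t0 + t0 / 2) = sgn := by
      rcases lt_trichotomy t0 0 with h | h | h
      · rw [← ht0, Real.sign_of_neg h, Real.sign_of_neg (by linarith)]
      · exact absurd h ht0ne
      · rw [← ht0, Real.sign_of_pos h, Real.sign_of_pos (by linarith)]
    have hs2 : Real.sign (t0 / 2) = sgn := by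
      rcases lt_trichotomy t0 0 with h | h | h
      · rw [← ht0, Real.sign_of_neg h, Real.sign_of_neg (by linarith)]
      · exact absurd h ht0ne
      · rw [← ht0, Real.sign_of_pos h, Real.sign_of_pos (by linarith)]
    have hδ : β * t0 / 2 ≠ 0 := by
      apply div_ne_zero (mul_ne_zero hβ ht0ne) two_ne_zero
    have e1 : α + β * (t0 + t0 / 2) = β * t0 / 2 := by
      rw [show α + β * (t0 + t0 / 2) = (α + β * t0) + β * t0 / 2 from by ring, h0, zero_add]
    have e2 : α + β * (t0 / 2) = -(β * t0 / 2) := by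
      rw [show α + β * (t0 / 2) = (α + β * t0) - β * t0 / 2 from by ring, h0]; ring
    have m1 := hsig (t0 + t0 / 2) hs1
    rw [e1] at m1
    have m2 := hsig (t0 / 2) hs2
    rw [e2] at m2
    rcases lt_or_gt_of_ne hδ with h | h
    · rcases m1 with u | u
      · rw [Real.sign_of_neg h] at u; norm_num at u
      · rcases m2 with w | w
        · rw [Real.sign_of_pos (by linarith : (0:ℝ) < -(β * t0 / 2))] at w; norm_num at w
        · rw [Real.sign_of_neg h] at u
          rw [Real.sign_of_pos (by linarith : (0:ℝ) < -(β * t0 / 2))] at w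
          rw [← u] at w; norm_num at w
    · rcases m1 with u | u
      · rw [Real.sign_of_pos h] at u; norm_num at u
      · rcases m2 with w | w
        · rw [Real.sign_of_neg (by linarith : -(β * t0 / 2) < 0)] at w; norm_num at w
        · rw [Real.sign_of_pos h] at u
          rw [Real.sign_of_neg (by linarith : -(β * t0 / 2) < 0)] at w
          rw [← u] at w; norm_num at w
  rw [hβ, zero_mul, add_zero] at h0 ⊢
  exact h0

private lemma det_zero_prop (y y' : Fin m → Fin n → ℝ) (d : ℕ) (ω : Fin d → Fin n → ℝ)
    {I' I : Fin m → Fin n → ℝ} (hI : IsInfluence I)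
    (hord : Preceq I' I) (hsd : SignedDet y y' d ω I)
    {v' w' : Fin m → Fin n → ℝ} (hv' : InSigma I' v') (hw' : InSigma I' w')
    (h0 : (Mt y y' d ω v').det = 0) : (Mt y y' d ω w').det = 0 := by
  classical
  set h : Finset (Fin m × Fin n) → (Fin m → Fin n → ℝ) :=
    fun S r i => if (r, i) ∈ S then w' r i else v' r i with hhdef
  have hmem : ∀ S, InSigma I' (h S) := by
    intro S r i
    by_cases hS : (r, i) ∈ S
    · simpa [hhdef, hS] using hw' r i
    · simpa [hhdef, hS] using hv' r i
  have key : ∀ S : Finset (Fin m × Fin n), (Mt y y' d ω (h S)).det = 0 := by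
    intro S
    induction S using Finset.induction_on with
    | empty =>
      have he : h ∅ = v' := by funext r i; simp [hhdef]
      rw [he]; exact h0
    | @insert p S hp ih =>
      obtain ⟨r, j⟩ := p
      have hins : h (insert (r, j) S) = updEntry (h S) r j (w' r j) := by
        funext r' i
        rw [updEntry_apply]
        by_cases h1 : r' = r ∧ i = j
        · obtain ⟨rfl, rfl⟩ := h1
          simp [hhdef]
        · have hne : ((r', i) : Fin m × Fin n) ≠ (r, j) := by
            simp only [ne_eq, Prod.mk.injEq]; exact h1
          simp only [hhdef, Finset.mem_insert, hne, false_or]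
          rw [if_neg h1]
      by_cases hc : I' r j = 0
      · have hv0 : v' r j = 0 := Real.sign_eq_zero_iff.mp ((hv' r j).trans hc)
        have hw0 : w' r j = 0 := Real.sign_eq_zero_iff.mp ((hw' r j).trans hc)
        have heq : w' r j = h S r j := by
          rw [hw0]; by_cases hS : (r, j) ∈ S <;> simp [hhdef, hS, hv0, hw0]
        rw [hins, heq, updEntry_self]
        exact ih
      · obtain ⟨α, β, haff⟩ := det_upd_affine y y' d ω (h S) r j
        have hzero1 : α + β * (h S r j) = 0 := by
          rw [← haff, updEntry_self]; exact ih
        have hsig : ∀ t : ℝ, Real.sign t = I' r j →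
            Real.sign (α + β * t) = 0 ∨
            Real.sign (α + β * t) = Real.sign (Mt y y' d ω I).det := by
          intro t ht
          rw [← haff t]
          apply sign_mem_aux y y' d ω hI hord hsd
          intro r' i
          rw [updEntry_apply]
          by_cases h1 : r' = r ∧ i = j
          · rw [if_pos h1]
            obtain ⟨rfl, rfl⟩ := h1
            exact ht
          · rw [if_neg h1]
            exact hmem S r' i
        have hfinal : α + β * (w' r j) = 0 :=
          affine_zero hsig (hmem S r j) hc hzero1 (hw' r j)
        rw [hins, haff (w' r j)]
        exact hfinal
  have huniv : h Finset.univ = w' := by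
    funext r i; simp [hhdef]
  rw [← huniv]
  exact key Finset.univ

end Aux

/-- Lemma `support` (ii). -/
theorem stmt6 {n m s : ℕ} (d : ℕ) (hd : d = n - s)
    (y y' : Fin m → Fin n → ℝ)
    (hs : Module.finrank ℝ (stoichSpan y y') = s)
    (ω : Fin d → Fin n → ℝ)
    (hω : IsReducedBasis d (stoichSpan y y') ω)
    (I' I : Fin m → Fin n → ℝ)
    (hI' : IsInfluence I') (hI : IsInfluence I)
    (hord : Preceq I' I) :
    (SignedDet y y' d ω I → SignedDet y y' d ω I') ∧
    (IsSNS y y' d ω I → IsSNS y y' d ω I' →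
      ∀ v v', InSigma I v → InSigma I' v' →
        Real.sign (Mt y y' d ω v).det = Real.sign (Mt y y' d ω v').det) ∧
    (IsSNS y y' d ω I' → SignedDet y y' d ω I → IsSNS y y' d ω I) := by
  have hselfI : InSigma I I := selfSigma hI
  have hselfI' : InSigma I' I' := selfSigma hI'
  refine ⟨?_, ?_, ?_⟩
  · intro hsd v w hv hw
    by_cases h0 : (Mt y y' d ω v).det = 0
    · have h0w := det_zero_prop y y' d ω hI hord hsd hv hw h0
      rw [h0, h0w]
    · have h0w : (Mt y y' d ω w).det ≠ 0 := fun hw0 =>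
        h0 (det_zero_prop y y' d ω hI hord hsd hw hv hw0)
      rcases sign_mem_aux y y' d ω hI hord hsd hv with h1 | h1
      · exact absurd (Real.sign_eq_zero_iff.mp h1) h0
      rcases sign_mem_aux y y' d ω hI hord hsd hw with h2 | h2
      · exact absurd (Real.sign_eq_zero_iff.mp h2) h0w
      rw [h1, h2]
  · intro hsns hsns' v v' hv hv'
    have h1 : Real.sign (Mt y y' d ω v).det = Real.sign (Mt y y' d ω I).det :=
      hsns.1 v I hv hselfI
    rcases sign_mem_aux y y' d ω hI hord hsns.1 hv' with h2 | h2
    · exact absurd (Real.sign_eq_zero_iff.mp h2) (hsns'.2 v' hv')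
    · rw [h1, h2]
  · intro hsns' hsd
    refine ⟨hsd, fun v hv hdet => ?_⟩
    have hne : (Mt y y' d ω I').det ≠ 0 := hsns'.2 I' hselfI'
    rcases sign_mem_aux y y' d ω hI hord hsd hselfI' with h2 | h2
    · exact hne (Real.sign_eq_zero_iff.mp h2)
    · have h3 : Real.sign (Mt y y' d ω v).det = Real.sign (Mt y y' d ω I).det :=
        hsd v I hv hselfI
      rw [hdet, Real.sign_zero] at h3
      rw [← h3] at h2
      exact hne (Real.sign_eq_zero_iff.mp h2)

end CRN
end
end
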